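/- Let r ≥ 0 and set a = 2 e^{4r} ‖σ‖_{L^p[0,1]}³. There exists a constant C > 0, depending only on r, σ₁, σ₂, such that for every μ ∈ ℂ with Im μ > −r satisfying γ₁(μ) ≤ 1/(2a) and γ₂(μ) ≤ 1/(2a), the following holds: if (w₁,w₂) is a solution of the Dirac system with parameter μ satisfying w₁(0) = 1 and w₂(1) = 0, then for all x ∈ [0,1], |e^{−iμx} w₁(x) − 1 + (K₁e)(x)| ≤ C γ̃(μ) and |e^{−iμx} w₂(x) − ∫ₓ¹ e^{2iμ(t−x)} σ₂(t) dt + ∫ₓ¹ e^{2iμ(t−x)} σ₂(t) (K₁e)(t) dt| ≤ C γ̃(μ). -/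

import Mathlib

open MeasureTheory Set
open scoped ENNReal

noncomputable section

/-- The integral operator `K₁` associated with the Dirac system. -/
def K1 (σ₁ σ₂ : ℝ → ℂ) (μ : ℂ) (z : ℝ → ℂ) : ℝ → ℂ := fun x =>
  ∫ t in (0:ℝ)..x, σ₁ t * ∫ s in t..(1:ℝ),
    Complex.exp (2 * Complex.I * μ * (s - t)) * σ₂ s * z s

/-- The integral operator `K₂` associated with the Dirac system. -/
def K2 (σ₁ σ₂ : ℝ → ℂ) (μ : ℂ) (z : ℝ → ℂ) : ℝ → ℂ := fun x =>
  ∫ t in x..(1:ℝ), σ₂ t * ∫ s in (0:ℝ)..t,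
    Complex.exp (2 * Complex.I * μ * (t - s)) * σ₁ s * z s

/-- `γ₀₁(x,μ) = |∫₀ˣ e^{2iμ(x−t)} σ₁(t) dt|`. -/
def gamma01 (σ₁ : ℝ → ℂ) (μ : ℂ) (x : ℝ) : ℝ :=
  ‖∫ t in (0:ℝ)..x, Complex.exp (2 * Complex.I * μ * (x - t)) * σ₁ t‖

/-- `γ₀₂(x,μ) = |∫ₓ¹ e^{2iμ(t−x)} σ₂(t) dt|`. -/
def gamma02 (σ₂ : ℝ → ℂ) (μ : ℂ) (x : ℝ) : ℝ :=
  ‖∫ t in x..(1:ℝ), Complex.exp (2 * Complex.I * μ * (t - x)) * σ₂ t‖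

/-- `γ₁(μ) = ‖γ₀₁(·,μ)‖_{L^q[0,1]}`. -/
def gamma1 (σ₁ : ℝ → ℂ) (q : ℝ≥0∞) (μ : ℂ) : ℝ :=
  (eLpNorm (fun x => gamma01 σ₁ μ x) q (volume.restrict (Icc (0:ℝ) 1))).toReal

/-- `γ₂(μ) = ‖γ₀₂(·,μ)‖_{L^q[0,1]}`. -/
def gamma2 (σ₂ : ℝ → ℂ) (q : ℝ≥0∞) (μ : ℂ) : ℝ :=
  (eLpNorm (fun x => gamma02 σ₂ μ x) q (volume.restrict (Icc (0:ℝ) 1))).toReal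

/-- `γ̃(μ) = ∫₀¹ |σ₂| γ₀₁² + ∫₀¹ |σ₁| γ₀₂²`. -/
def gammaT (σ₁ σ₂ : ℝ → ℂ) (μ : ℂ) : ℝ :=
  (∫ s in (0:ℝ)..1, ‖σ₂ s‖ * (gamma01 σ₁ μ s) ^ 2)
    + ∫ s in (0:ℝ)..1, ‖σ₁ s‖ * (gamma02 σ₂ μ s) ^ 2

/-- `‖σ‖_{L^p[0,1]}` where `σ(x) = max(|σ₁(x)|,|σ₂(x)|)`. -/
def sigmaNorm (σ₁ σ₂ : ℝ → ℂ) (p : ℝ≥0∞) : ℝ :=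
  (eLpNorm (fun x => max ‖σ₁ x‖ ‖σ₂ x‖) p (volume.restrict (Icc (0:ℝ) 1))).toReal

/-- The constant function `1` on `[0,1]`. -/
def eFun : ℝ → ℂ := fun _ => 1

/-- A solution of the Dirac system `y₁' + σ₁ y₂ = iμ y₁`, `y₂' + σ₂ y₁ = −iμ y₂` on `[0,1]`,
with `y₁, y₂` absolutely continuous (i.e. in `W^{1,1}[0,1]`, so each is the indefinite
integral of an integrable function, and the equations hold a.e. with those derivatives). -/
def IsDiracSolution (σ₁ σ₂ : ℝ → ℂ) (μ : ℂ) (y₁ y₂ : ℝ → ℂ) : Prop :=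
  ∃ g₁ g₂ : ℝ → ℂ,
    IntervalIntegrable g₁ volume 0 1 ∧ IntervalIntegrable g₂ volume 0 1 ∧
    (∀ x ∈ Icc (0:ℝ) 1, y₁ x = y₁ 0 + ∫ t in (0:ℝ)..x, g₁ t) ∧
    (∀ x ∈ Icc (0:ℝ) 1, y₂ x = y₂ 0 + ∫ t in (0:ℝ)..x, g₂ t) ∧
    (∀ᵐ x ∂(volume.restrict (Icc (0:ℝ) 1)),
      g₁ x + σ₁ x * y₂ x = Complex.I * μ * y₁ x) ∧
    (∀ᵐ x ∂(volume.restrict (Icc (0:ℝ) 1)),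
      g₂ x + σ₂ x * y₁ x = -(Complex.I * μ) * y₂ x)

/-!
Write `u = e^{-iμx} w₁`, `v = e^{-iμx} w₂` and `Q z (y) = ∫_y^1 e^{2iμ(s-y)} σ₂(s) z(s) ds`
(`tailOp`), so that `K₁ z = ∫₀ˣ σ₁ (Q z)`. Integrating the Dirac system against `e^{∓iμx}` and
using `w₁(0) = 1`, `w₂(1) = 0` gives the integral system `u = 1 - ∫₀ˣ σ₁ v`, `v = Q u`. Hence
`u - 1 + K₁ e = ∫₀ˣ σ₁ (Q e - v)`, and one Fubini swap writes
`Q e - v = Q (∫₀^· σ₁ v)` as `(∫₀ʸ σ₁ v) Q e(y) + ∫_y^1 σ₁ v e^{2iμ(t-y)} Q e(t) dt`,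
which is small because `|Q e| = γ₀₂`. By Hölder, `∫ |σ₁| γ₀₂ ≤ ‖σ‖_p γ₂`, so the hypothesis on `γ₂`
turns the resulting estimate into a contraction that bounds `sup |u|`, hence `sup |v|`. Feeding
`|v| ≤ γ₀₂ (1 + ·) + ·` back in and using Cauchy–Schwarz `(∫ |σ₁| γ₀₂)² ≤ ∫ |σ₁| · ∫ |σ₁| γ₀₂²`
bounds the remainder by a multiple of `∫ |σ₁| γ₀₂² ≤ γ̃`. The second estimate is `Q` applied to
the first remainder.
-/

open Complex

theorem MeasureTheory.IntegrableOn.intervalIntegrable_of_mem_Icc {E : Type*} [NormedAddCommGroup E]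
    {f : ℝ → E} {c d a b : ℝ} (hf : IntegrableOn f (Icc c d)) (ha : a ∈ Icc c d)
    (hb : b ∈ Icc c d) : IntervalIntegrable f volume a b :=
  (hf.mono_set (uIcc_subset_Icc ha hb)).intervalIntegrable

theorem MeasureTheory.IntegrableOn.continuousOn_primitive {E : Type*} [NormedAddCommGroup E]
    [NormedSpace ℝ E] {f : ℝ → E} {a b : ℝ} (hab : a ≤ b) (hf : IntegrableOn f (Icc a b)) :
    ContinuousOn (fun x => ∫ t in a..x, f t) (Icc a b) := by
  have := intervalIntegral.continuousOn_primitive_interval (uIcc_of_le hab ▸ hf)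
  rwa [uIcc_of_le hab] at this

theorem intervalIntegrable_norm_mul {E : Type*} [NormedAddCommGroup E] {σ : ℝ → E} {f : ℝ → ℝ}
    (hσ : IntegrableOn σ (Icc 0 1))
    (hf : ContinuousOn f (Icc 0 1)) : IntervalIntegrable (fun t => ‖σ t‖ * f t) volume 0 1 :=
  (IntegrableOn.mul_continuousOn hσ.norm hf isCompact_Icc).intervalIntegrable_of_mem_Icc
    unitInterval.zero_mem unitInterval.one_mem

theorem norm_integral_le_integral_of_subset_Icc {E : Type*} [NormedAddCommGroup E]
    [NormedSpace ℝ E] {f : ℝ → E} {g : ℝ → ℝ} {a b c d : ℝ}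
    (hab : a ≤ b) (ha : c ≤ a) (hb : b ≤ d) (hg : IntervalIntegrable g volume c d)
    (hg0 : ∀ t ∈ Icc c d, 0 ≤ g t) (hfg : ∀ t ∈ Icc a b, ‖f t‖ ≤ g t) :
    ‖∫ t in a..b, f t‖ ≤ ∫ t in c..d, g t := by
  refine (intervalIntegral.norm_integral_le_of_norm_le hab
    (ae_of_all _ fun t ht => hfg t (Ioc_subset_Icc_self ht))
    (hg.mono_set (by
      rw [uIcc_of_le hab, uIcc_of_le (ha.trans (hab.trans hb))]
      exact Icc_subset_Icc ha hb))).trans ?_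
  refine intervalIntegral.integral_mono_interval ha hab hb ?_ hg
  exact (ae_restrict_iff' measurableSet_Ioc).2
    (ae_of_all _ fun t ht => hg0 t (Ioc_subset_Icc_self ht))

theorem integral_mul_le_of_le_mul_add {w f g : ℝ → ℝ} {a b c d : ℝ} (hab : a ≤ b)
    (hw0 : ∀ t ∈ Icc a b, 0 ≤ w t) (hw : IntervalIntegrable w volume a b)
    (hwf : IntervalIntegrable (fun t => w t * f t) volume a b)
    (hwg : IntervalIntegrable (fun t => w t * g t) volume a b)
    (hfg : ∀ t ∈ Icc a b, f t ≤ g t * c + d) :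
    ∫ t in a..b, w t * f t ≤ (∫ t in a..b, w t * g t) * c + (∫ t in a..b, w t) * d := by
  rw [← intervalIntegral.integral_mul_const, ← intervalIntegral.integral_mul_const,
    ← intervalIntegral.integral_add (hwg.mul_const c) (hw.mul_const d)]
  refine intervalIntegral.integral_mono_on hab hwf
    ((hwg.mul_const c).add (hw.mul_const d)) fun t ht => ?_
  calc w t * f t ≤ w t * (g t * c + d) := mul_le_mul_of_nonneg_left (hfg t ht) (hw0 t ht)
    _ = _ := by ring

theorem integral_mul_integral_triangle_swap {𝕜 : Type*} [RCLike 𝕜] {a b : ℝ} (hab : a ≤ b)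
    {f g : ℝ → 𝕜} (hf : IntervalIntegrable f volume a b) (hg : IntervalIntegrable g volume a b) :
    (∫ t in a..b, f t * ∫ s in t..b, g s) = ∫ s in a..b, (∫ t in a..s, f t) * g s := by
  set ν := volume.restrict (Ioc a b)
  let F : ℝ → ℝ → 𝕜 := fun t s => {p : ℝ × ℝ | p.1 < p.2}.indicator (fun p => f p.1 * g p.2) (t, s)
  have hF : Integrable (Function.uncurry F) (ν.prod ν) :=
    (hf.1.mul_prod hg.1).indicator (measurableSet_lt measurable_fst measurable_snd)
  have inner_snd : ∀ t ∈ Ioc a b, ∫ s, F t s ∂ν = f t * ∫ s in t..b, g s := by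
    intro t ht
    calc ∫ s, F t s ∂ν = ∫ s in Ioc a b, (Ioi t).indicator (fun s => f t * g s) s := rfl
      _ = f t * ∫ s in t..b, g s := by
        rw [setIntegral_indicator measurableSet_Ioi, Ioc_inter_Ioi, sup_eq_right.2 ht.1.le,
          integral_const_mul, intervalIntegral.integral_of_le ht.2]
  have inner_fst : ∀ s ∈ Ioc a b, ∫ t, F t s ∂ν = (∫ t in a..s, f t) * g s := by
    intro s hs
    calc ∫ t, F t s ∂ν = ∫ t in Ioc a b, (Iio s).indicator (fun t => f t * g s) t := rfl
      _ = (∫ t in a..s, f t) * g s := by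
        rw [setIntegral_indicator measurableSet_Iio,
          setIntegral_congr_set ((ae_eq_refl _).inter Iio_ae_eq_Iic), Ioc_inter_Iic,
          inf_eq_right.2 hs.2, integral_mul_const, intervalIntegral.integral_of_le hs.1.le]
  rw [intervalIntegral.integral_of_le hab, intervalIntegral.integral_of_le hab,
    ← setIntegral_congr_fun measurableSet_Ioc inner_snd,
    ← setIntegral_congr_fun measurableSet_Ioc inner_fst]
  exact integral_integral_swap hF

theorem integral_const_mul_cexp_mul (c : ℂ) (a b : ℝ) :
    ∫ s in a..b, c * cexp (c * s) = cexp (c * b) - cexp (c * a) := by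
  refine intervalIntegral.integral_eq_sub_of_hasDerivAt (f := fun s : ℝ => cexp (c * s))
    (fun s _ => ?_)
    ((by fun_prop : Continuous fun s : ℝ => c * cexp (c * s)).intervalIntegrable _ _)
  simpa [mul_comm] using ((hasDerivAt_id (s : ℂ)).const_mul c).cexp.comp_ofReal

/-- `w` is only absolutely continuous, so the product rule for `e^{c t} w t` is replaced by an
integration by parts through one Fubini swap. -/
theorem cexp_mul_mul_eq_add_integral {c : ℂ} {w g h : ℝ → ℂ} {a x : ℝ} (hax : a ≤ x)
    (hg : IntervalIntegrable g volume a x) (hw : ∀ y ∈ Icc a x, w y = w a + ∫ t in a..y, g t)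
    (hgh : ∀ᵐ t ∂volume.restrict (Icc a x), g t + c * w t = h t) :
    cexp (c * x) * w x = cexp (c * a) * w a + ∫ t in a..x, cexp (c * t) * h t := by
  set P : ℝ → ℂ := fun y => ∫ t in a..y, g t
  have hexp : Continuous fun s : ℝ => cexp (c * s) := by fun_prop
  have hexp_g : IntervalIntegrable (fun t => cexp (c * t) * g t) volume a x :=
    hg.continuousOn_mul hexp.continuousOn
  have hP : IntervalIntegrable (fun t => P t * (c * cexp (c * t))) volume a x :=
    ContinuousOn.intervalIntegrable <|
      (intervalIntegral.continuousOn_primitive_interval' hg left_mem_uIcc).mul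
        (hexp.const_mul c).continuousOn
  have hparts : ∫ t in a..x, P t * (c * cexp (c * t))
      = cexp (c * x) * P x - ∫ t in a..x, cexp (c * t) * g t := by
    rw [← integral_mul_integral_triangle_swap hax hg ((hexp.const_mul c).intervalIntegrable _ _),
      ← intervalIntegral.integral_const_mul, ← intervalIntegral.integral_sub
        (hg.const_mul _) hexp_g]
    refine intervalIntegral.integral_congr fun t _ => ?_
    simp only [integral_const_mul_cexp_mul]
    ring
  have hrw : ∫ t in a..x, cexp (c * t) * h t
      = ∫ t in a..x,
          (cexp (c * t) * g t + (w a * (c * cexp (c * t)) + P t * (c * cexp (c * t)))) := by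
    refine intervalIntegral.integral_congr_ae ?_
    filter_upwards [(ae_restrict_iff' measurableSet_Icc).1 hgh] with t ht htx
    rw [uIoc_of_le hax] at htx
    rw [← ht (Ioc_subset_Icc_self htx), hw t (Ioc_subset_Icc_self htx)]
    ring
  have hwa : IntervalIntegrable (fun t => w a * (c * cexp (c * t))) volume a x :=
    ((hexp.const_mul c).intervalIntegrable _ _).const_mul _
  rw [hrw, intervalIntegral.integral_add hexp_g (hwa.add hP), intervalIntegral.integral_add hwa hP,
    intervalIntegral.integral_const_mul, integral_const_mul_cexp_mul, hparts, hw x ⟨hax, le_rfl⟩]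
  ring

theorem sq_integral_mul_le_integral_mul_integral_mul_sq {α : Type*} [MeasurableSpace α]
    {ν : Measure α} {w f : α → ℝ} (hw : 0 ≤ᵐ[ν] w) (hw_int : Integrable w ν)
    (hwf : Integrable (fun x => w x * f x) ν) (hwf2 : Integrable (fun x => w x * f x ^ 2) ν) :
    (∫ x, w x * f x ∂ν) ^ 2 ≤ (∫ x, w x ∂ν) * ∫ x, w x * f x ^ 2 ∂ν := by
  have hquad : ∀ c : ℝ, 0 ≤ (∫ x, w x ∂ν) * (c * c) + (-2 * ∫ x, w x * f x ∂ν) * c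
      + ∫ x, w x * f x ^ 2 ∂ν := by
    intro c
    have hexpand : ∀ x, w x * (f x - c) ^ 2
        = w x * (c * c) + -2 * c * (w x * f x) + w x * f x ^ 2 := fun x => by ring
    have hsq : 0 ≤ ∫ x, w x * (f x - c) ^ 2 ∂ν :=
      integral_nonneg_of_ae <| hw.mono fun x hx => mul_nonneg hx (sq_nonneg _)
    simp_rw [hexpand] at hsq
    rw [integral_add (f := fun x => w x * (c * c) + -2 * c * (w x * f x))
        ((hw_int.mul_const _).add (hwf.const_mul _)) hwf2,
      integral_add (hw_int.mul_const _) (hwf.const_mul _), integral_mul_const,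
      integral_const_mul, mul_assoc] at hsq
    linarith
  have := discrim_le_zero hquad
  rw [discrim] at this
  nlinarith

theorem integral_norm_mul_le_toReal_eLpNorm_mul {α E : Type*} [MeasurableSpace α]
    [NormedAddCommGroup E] {ν : Measure α} {p q : ℝ≥0∞} [p.HolderTriple q 1] {f : α → E}
    {g : α → ℝ} (hf : MemLp f p ν) (hg : MemLp g q ν) :
    ∫ x, ‖f x‖ * ‖g x‖ ∂ν ≤ (eLpNorm f p ν).toReal * (eLpNorm g q ν).toReal := by
  have hholder := eLpNorm_smul_le_mul_eLpNorm (p := p) (q := q) (r := 1) hg.1 hf.1.norm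
  rw [eLpNorm_norm] at hholder
  calc ∫ x, ‖f x‖ * ‖g x‖ ∂ν = (eLpNorm ((fun x => ‖f x‖) • g) 1 ν).toReal := by
        rw [eLpNorm_one_eq_lintegral_enorm, ← integral_norm_eq_lintegral_enorm
          (hf.1.norm.smul hg.1)]
        exact integral_congr_ae (ae_of_all _ fun x => by simp [norm_mul])
    _ ≤ (eLpNorm f p ν * eLpNorm g q ν).toReal :=
        ENNReal.toReal_mono (ENNReal.mul_ne_top hf.eLpNorm_ne_top hg.eLpNorm_ne_top) hholder
    _ = _ := ENNReal.toReal_mul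

instance : IsProbabilityMeasure (volume.restrict (Icc (0:ℝ) 1)) :=
  ⟨by simp⟩

theorem intervalIntegral_zero_one_eq_integral_Icc {E : Type*} [NormedAddCommGroup E]
    [NormedSpace ℝ E] (f : ℝ → E) :
    ∫ t in (0:ℝ)..1, f t = ∫ t, f t ∂volume.restrict (Icc (0:ℝ) 1) := by
  rw [intervalIntegral.integral_of_le zero_le_one, integral_Icc_eq_integral_Ioc]

theorem norm_cexp_two_mul_I_mul_sub_le {r : ℝ} (hr : 0 ≤ r) {μ : ℂ} (hμ : -r < μ.im) {t s : ℝ}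
    (hts : t ≤ s) (hst : s - t ≤ 1) : ‖cexp (2 * I * μ * (s - t))‖ ≤ Real.exp (2 * r) := by
  rw [norm_exp, Real.exp_le_exp]
  have hre : (2 * I * μ * ((s : ℂ) - t)).re = -2 * μ.im * (s - t) := by
    simp [mul_re, mul_im]
  rw [hre]
  nlinarith

def tailOp (σ₂ : ℝ → ℂ) (μ : ℂ) (z : ℝ → ℂ) (y : ℝ) : ℂ :=
  ∫ s in y..(1:ℝ), cexp (2 * I * μ * (s - y)) * σ₂ s * z s

section TailOp

variable {σ₁ σ₂ : ℝ → ℂ} {μ : ℂ} {z z₁ z₂ : ℝ → ℂ} {y : ℝ}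

theorem K1_eq_integral_tailOp (z : ℝ → ℂ) (x : ℝ) :
    K1 σ₁ σ₂ μ z x = ∫ t in (0:ℝ)..x, σ₁ t * tailOp σ₂ μ z t := rfl

theorem tailOp_eFun_eq (y : ℝ) :
    tailOp σ₂ μ eFun y = ∫ s in y..(1:ℝ), cexp (2 * I * μ * (s - y)) * σ₂ s := by
  simp only [tailOp, eFun, mul_one]

theorem norm_tailOp_eFun (y : ℝ) : ‖tailOp σ₂ μ eFun y‖ = gamma02 σ₂ μ y := by
  rw [tailOp_eFun_eq, gamma02]

theorem gamma02_nonneg (σ₂ : ℝ → ℂ) (μ : ℂ) (y : ℝ) : 0 ≤ gamma02 σ₂ μ y := norm_nonneg _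

theorem intervalIntegrable_tailOp_integrand (hz : IntegrableOn (fun s => σ₂ s * z s) (Icc 0 1))
    {a b : ℝ} (ha : a ∈ Icc (0:ℝ) 1) (hb : b ∈ Icc (0:ℝ) 1) :
    IntervalIntegrable (fun s : ℝ => cexp (2 * I * μ * (s - y)) * σ₂ s * z s) volume a b := by
  simp only [mul_assoc]
  exact (hz.intervalIntegrable_of_mem_Icc ha hb).continuousOn_mul (by fun_prop)

theorem tailOp_eq_cexp_mul (z : ℝ → ℂ) (y : ℝ) :
    tailOp σ₂ μ z y
      = cexp (-(2 * I * μ * y)) * ∫ s in y..(1:ℝ), cexp (2 * I * μ * s) * σ₂ s * z s := by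
  rw [tailOp, ← intervalIntegral.integral_const_mul]
  refine intervalIntegral.integral_congr fun s _ => ?_
  simp only [← mul_assoc, ← Complex.exp_add]
  ring_nf

theorem continuousOn_tailOp (hz : IntegrableOn (fun s => σ₂ s * z s) (Icc 0 1)) :
    ContinuousOn (tailOp σ₂ μ z) (Icc 0 1) := by
  have hint : IntegrableOn (fun s : ℝ => cexp (2 * I * μ * s) * σ₂ s * z s) (uIcc 0 1) := by
    simp only [mul_assoc, uIcc_of_le zero_le_one]
    exact hz.continuousOn_mul (by fun_prop) isCompact_Icc
  have := (intervalIntegral.continuousOn_primitive_interval_left hint).mul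
    (by fun_prop : Continuous fun y : ℝ => cexp (-(2 * I * μ * y))).continuousOn
  rw [uIcc_of_le zero_le_one] at this
  exact this.congr fun y _ => (tailOp_eq_cexp_mul z y).trans (mul_comm _ _)

theorem continuousOn_gamma02 (hσ₂ : IntegrableOn σ₂ (Icc 0 1)) :
    ContinuousOn (gamma02 σ₂ μ) (Icc 0 1) :=
  (continuousOn_tailOp (z := eFun) (by simpa [eFun] using hσ₂)).norm.congr fun y _ =>
    (norm_tailOp_eFun y).symm

theorem continuousOn_K1_eFun (hσ₁ : IntegrableOn σ₁ (Icc 0 1))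
    (hσ₂ : IntegrableOn σ₂ (Icc 0 1)) : ContinuousOn (K1 σ₁ σ₂ μ eFun) (Icc 0 1) :=
  (hσ₁.mul_continuousOn (continuousOn_tailOp (by simpa [eFun] using hσ₂))
    isCompact_Icc).continuousOn_primitive zero_le_one

theorem tailOp_congr (hy : y ≤ 1) (h : ∀ s ∈ Icc y 1, z₁ s = z₂ s) :
    tailOp σ₂ μ z₁ y = tailOp σ₂ μ z₂ y :=
  intervalIntegral.integral_congr fun s hs => by
    rw [uIcc_of_le hy] at hs
    simp only [h s hs]

theorem tailOp_sub (hz₁ : IntegrableOn (fun s => σ₂ s * z₁ s) (Icc 0 1))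
    (hz₂ : IntegrableOn (fun s => σ₂ s * z₂ s) (Icc 0 1)) (hy : y ∈ Icc (0:ℝ) 1) :
    tailOp σ₂ μ (fun s => z₁ s - z₂ s) y = tailOp σ₂ μ z₁ y - tailOp σ₂ μ z₂ y := by
  rw [tailOp, tailOp, tailOp, ← intervalIntegral.integral_sub
    (intervalIntegrable_tailOp_integrand hz₁ hy unitInterval.one_mem)
    (intervalIntegrable_tailOp_integrand hz₂ hy unitInterval.one_mem)]
  simp only [mul_sub]

theorem tailOp_add (hz₁ : IntegrableOn (fun s => σ₂ s * z₁ s) (Icc 0 1))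
    (hz₂ : IntegrableOn (fun s => σ₂ s * z₂ s) (Icc 0 1)) (hy : y ∈ Icc (0:ℝ) 1) :
    tailOp σ₂ μ (fun s => z₁ s + z₂ s) y = tailOp σ₂ μ z₁ y + tailOp σ₂ μ z₂ y := by
  rw [tailOp, tailOp, tailOp, ← intervalIntegral.integral_add
    (intervalIntegrable_tailOp_integrand hz₁ hy unitInterval.one_mem)
    (intervalIntegrable_tailOp_integrand hz₂ hy unitInterval.one_mem)]
  simp only [mul_add]

theorem norm_tailOp_le {r : ℝ} (hr : 0 ≤ r) (hμ : -r < μ.im) (hσ₂ : IntegrableOn σ₂ (Icc 0 1))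
    {M : ℝ} (hz : ∀ s ∈ Icc (0:ℝ) 1, ‖z s‖ ≤ M) (hy : y ∈ Icc (0:ℝ) 1) :
    ‖tailOp σ₂ μ z y‖ ≤ Real.exp (2 * r) * (∫ s in (0:ℝ)..1, ‖σ₂ s‖) * M := by
  have hM : 0 ≤ M := (norm_nonneg _).trans (hz 0 unitInterval.zero_mem)
  refine (norm_integral_le_integral_of_subset_Icc (g := fun s => Real.exp (2 * r) * M * ‖σ₂ s‖)
    hy.2 hy.1 le_rfl ((IntegrableOn.intervalIntegrable_of_mem_Icc hσ₂.norm unitInterval.zero_mem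
      unitInterval.one_mem).const_mul _) (fun s _ => by positivity) fun s hs => ?_).trans_eq ?_
  · have := norm_cexp_two_mul_I_mul_sub_le hr hμ hs.1 (by linarith [hy.1, hs.2])
    rw [norm_mul, norm_mul]
    calc _ ≤ Real.exp (2 * r) * ‖σ₂ s‖ * M := by gcongr; exact hz s ⟨hy.1.trans hs.1, hs.2⟩
      _ = _ := by ring
  · rw [intervalIntegral.integral_const_mul]; ring

theorem gamma02_le (hr : 0 ≤ r) (hμ : -r < μ.im) (hσ₂ : IntegrableOn σ₂ (Icc 0 1))
    (hy : y ∈ Icc (0:ℝ) 1) : gamma02 σ₂ μ y ≤ Real.exp (2 * r) * ∫ s in (0:ℝ)..1, ‖σ₂ s‖ := by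
  simpa [norm_tailOp_eFun] using
    norm_tailOp_le (z := eFun) hr hμ hσ₂ (M := 1) (fun s _ => by simp [eFun]) hy

theorem integral_cexp_mul_eq_cexp_mul_tailOp_eFun (y t : ℝ) :
    ∫ s in t..(1:ℝ), cexp (2 * I * μ * (s - y)) * σ₂ s
      = cexp (2 * I * μ * (t - y)) * tailOp σ₂ μ eFun t := by
  rw [tailOp, ← intervalIntegral.integral_const_mul]
  refine intervalIntegral.integral_congr fun s _ => ?_
  simp only [eFun, mul_one, ← mul_assoc, ← Complex.exp_add]
  ring_nf

theorem tailOp_primitive {f : ℝ → ℂ} (hf : IntegrableOn f (Icc 0 1))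
    (hσ₂ : IntegrableOn σ₂ (Icc 0 1)) (hy : y ∈ Icc (0:ℝ) 1) :
    tailOp σ₂ μ (fun s => ∫ t in (0:ℝ)..s, f t) y
      = (∫ t in (0:ℝ)..y, f t) * tailOp σ₂ μ eFun y
        + ∫ t in y..(1:ℝ), f t * (cexp (2 * I * μ * (t - y)) * tailOp σ₂ μ eFun t) := by
  have hf' : ∀ {a b : ℝ}, a ∈ Icc (0:ℝ) 1 → b ∈ Icc (0:ℝ) 1 → IntervalIntegrable f volume a b :=
    fun ha hb => hf.intervalIntegrable_of_mem_Icc ha hb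
  have hk : IntervalIntegrable (fun s : ℝ => cexp (2 * I * μ * (s - y)) * σ₂ s) volume y 1 :=
    (hσ₂.intervalIntegrable_of_mem_Icc hy unitInterval.one_mem).continuousOn_mul (by fun_prop)
  have hsplit : tailOp σ₂ μ (fun s => ∫ t in (0:ℝ)..s, f t) y
      = ∫ s in y..(1:ℝ), (cexp (2 * I * μ * (s - y)) * σ₂ s * (∫ t in (0:ℝ)..y, f t)
          + (∫ t in y..s, f t) * (cexp (2 * I * μ * (s - y)) * σ₂ s)) := by
    refine intervalIntegral.integral_congr fun s hs => ?_
    rw [uIcc_of_le hy.2] at hs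
    dsimp only
    rw [← intervalIntegral.integral_add_adjacent_intervals (hf' unitInterval.zero_mem hy)
      (hf' hy ⟨hy.1.trans hs.1, hs.2⟩)]
    ring
  have hk' : IntervalIntegrable (fun s => (∫ t in y..s, f t) * (cexp (2 * I * μ * (s - y)) * σ₂ s))
      volume y 1 := hk.continuousOn_mul
    (intervalIntegral.continuousOn_primitive_interval' (hf' hy unitInterval.one_mem) left_mem_uIcc)
  rw [hsplit, intervalIntegral.integral_add (hk.mul_const _) hk',
    intervalIntegral.integral_mul_const, ← integral_mul_integral_triangle_swap hy.2
      (hf' hy unitInterval.one_mem) hk, mul_comm]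
  congr 2
  · exact (tailOp_eFun_eq y).symm
  · exact funext fun t => by rw [integral_cexp_mul_eq_cexp_mul_tailOp_eFun]

end TailOp

theorem continuousOn_of_eq_add_integral {E : Type*} [NormedAddCommGroup E] [NormedSpace ℝ E]
    {w g : ℝ → E} (hg : IntervalIntegrable g volume 0 1)
    (hw : ∀ x ∈ Icc (0:ℝ) 1, w x = w 0 + ∫ t in (0:ℝ)..x, g t) : ContinuousOn w (Icc 0 1) := by
  have := (intervalIntegral.continuousOn_primitive_interval' hg left_mem_uIcc).const_add (w 0)
  rw [uIcc_of_le zero_le_one] at this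
  exact this.congr hw

theorem cexp_mul_mul_eq_add_integral_of_mem_Icc {c : ℂ} {w g h : ℝ → ℂ}
    (hg : IntervalIntegrable g volume 0 1)
    (hw : ∀ x ∈ Icc (0:ℝ) 1, w x = w 0 + ∫ t in (0:ℝ)..x, g t)
    (hgh : ∀ᵐ t ∂volume.restrict (Icc 0 1), g t + c * w t = h t) {x : ℝ} (hx : x ∈ Icc (0:ℝ) 1) :
    cexp (c * x) * w x = w 0 + ∫ t in (0:ℝ)..x, cexp (c * t) * h t := by
  have hsub : Icc 0 x ⊆ Icc (0:ℝ) 1 := Icc_subset_Icc le_rfl hx.2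
  simpa using cexp_mul_mul_eq_add_integral hx.1
    (hg.mono_set (by rwa [uIcc_of_le hx.1, uIcc_of_le zero_le_one]))
    (fun y hy => hw y (hsub hy)) (ae_restrict_of_ae_restrict_of_subset hsub hgh)

/-- The Dirac system in integral form: it is satisfied by `e^{-iμx} (w₁ x, w₂ x)` when
`w₁ 0 = 1` and `w₂ 1 = 0`. -/
structure IsIntegralSolution (σ₁ σ₂ : ℝ → ℂ) (μ : ℂ) (u v : ℝ → ℂ) : Prop where
  continuousOn_fst : ContinuousOn u (Icc 0 1)
  continuousOn_snd : ContinuousOn v (Icc 0 1)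
  fst_eq : ∀ y ∈ Icc (0:ℝ) 1, u y = 1 - ∫ t in (0:ℝ)..y, σ₁ t * v t
  snd_eq : ∀ y ∈ Icc (0:ℝ) 1, v y = tailOp σ₂ μ u y

section DiracSolution

variable {σ₁ σ₂ : ℝ → ℂ} {μ : ℂ} {w₁ w₂ : ℝ → ℂ}

theorem IsDiracSolution.fst_eq (hsol : IsDiracSolution σ₁ σ₂ μ w₁ w₂) (hw₁0 : w₁ 0 = 1)
    {x : ℝ} (hx : x ∈ Icc (0:ℝ) 1) :
    cexp (-(I * μ * x)) * w₁ x = 1 - ∫ t in (0:ℝ)..x, σ₁ t * (cexp (-(I * μ * t)) * w₂ t) := by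
  obtain ⟨g₁, -, hg₁, -, hw₁, -, hode₁, -⟩ := hsol
  have hfst : cexp (-(I * μ) * x) * w₁ x
      = 1 + ∫ t in (0:ℝ)..x, cexp (-(I * μ) * t) * -(σ₁ t * w₂ t) :=
    hw₁0 ▸ cexp_mul_mul_eq_add_integral_of_mem_Icc hg₁ hw₁
      (hode₁.mono fun t ht => by linear_combination ht) hx
  rw [← neg_mul, hfst, sub_eq_add_neg, ← intervalIntegral.integral_neg]
  congr 1
  exact intervalIntegral.integral_congr fun t _ => by simp only [neg_mul]; ring

theorem IsDiracSolution.snd_eq (hσ₂ : IntegrableOn σ₂ (Icc 0 1))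
    (hsol : IsDiracSolution σ₁ σ₂ μ w₁ w₂) (hw₂1 : w₂ 1 = 0) {x : ℝ} (hx : x ∈ Icc (0:ℝ) 1) :
    cexp (-(I * μ * x)) * w₂ x = tailOp σ₂ μ (fun t => cexp (-(I * μ * t)) * w₁ t) x := by
  obtain ⟨g₁, g₂, hg₁, hg₂, hw₁, hw₂, -, hode₂⟩ := hsol
  have hsnd : ∀ x ∈ Icc (0:ℝ) 1, cexp (I * μ * x) * w₂ x
      = w₂ 0 + ∫ t in (0:ℝ)..x, cexp (I * μ * t) * -(σ₂ t * w₁ t) :=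
    fun x hx => cexp_mul_mul_eq_add_integral_of_mem_Icc hg₂ hw₂
      (hode₂.mono fun t ht => by linear_combination ht) hx
  have hk : IntegrableOn (fun t : ℝ => cexp (I * μ * t) * -(σ₂ t * w₁ t)) (Icc 0 1) :=
    ((hσ₂.mul_continuousOn (continuousOn_of_eq_add_integral hg₁ hw₁) isCompact_Icc).neg
      ).continuousOn_mul (by fun_prop : Continuous fun t : ℝ => cexp (I * μ * t)).continuousOn
      isCompact_Icc
  have htail : cexp (I * μ * x) * w₂ x
      = -∫ t in x..(1:ℝ), cexp (I * μ * t) * -(σ₂ t * w₁ t) := by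
    have h1 := hsnd 1 unitInterval.one_mem
    rw [hw₂1, mul_zero] at h1
    rw [hsnd x hx, ← intervalIntegral.integral_interval_sub_left
      (hk.intervalIntegrable_of_mem_Icc unitInterval.zero_mem unitInterval.one_mem)
      (hk.intervalIntegrable_of_mem_Icc unitInterval.zero_mem hx)]
    linear_combination -h1
  have hx_exp : cexp (-(I * μ * x)) = cexp (-(2 * I * μ * x)) * cexp (I * μ * x) := by
    rw [← Complex.exp_add]; ring_nf
  rw [tailOp_eq_cexp_mul, hx_exp, mul_assoc, htail, ← intervalIntegral.integral_neg]
  congr 1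
  refine intervalIntegral.integral_congr fun t _ => ?_
  have ht_exp : cexp (2 * I * μ * t) * cexp (-(I * μ * t)) = cexp (I * μ * t) := by
    rw [← Complex.exp_add]; ring_nf
  linear_combination -(σ₂ t * w₁ t) * ht_exp

theorem IsDiracSolution.isIntegralSolution (hσ₂ : IntegrableOn σ₂ (Icc 0 1))
    (hsol : IsDiracSolution σ₁ σ₂ μ w₁ w₂) (hw₁0 : w₁ 0 = 1) (hw₂1 : w₂ 1 = 0) :
    IsIntegralSolution σ₁ σ₂ μ (fun x => cexp (-(I * μ * x)) * w₁ x)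
      (fun x => cexp (-(I * μ * x)) * w₂ x) := by
  have ⟨g₁, g₂, hg₁, hg₂, hw₁, hw₂, _, _⟩ := hsol
  have hexp : Continuous fun x : ℝ => cexp (-(I * μ * x)) := by fun_prop
  exact ⟨hexp.continuousOn.mul (continuousOn_of_eq_add_integral hg₁ hw₁),
    hexp.continuousOn.mul (continuousOn_of_eq_add_integral hg₂ hw₂),
    fun _ hx => hsol.fst_eq hw₁0 hx, fun _ hx => hsol.snd_eq hσ₂ hw₂1 hx⟩

end DiracSolution

section Estimates

variable {σ₁ σ₂ : ℝ → ℂ} {μ : ℂ} {r : ℝ} {u v : ℝ → ℂ} {y : ℝ}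

theorem norm_K1_eFun_le (hσ₁ : IntegrableOn σ₁ (Icc 0 1)) (hσ₂ : IntegrableOn σ₂ (Icc 0 1))
    (hy : y ∈ Icc (0:ℝ) 1) :
    ‖K1 σ₁ σ₂ μ eFun y‖ ≤ ∫ t in (0:ℝ)..1, ‖σ₁ t‖ * gamma02 σ₂ μ t := by
  rw [K1_eq_integral_tailOp]
  exact norm_integral_le_integral_of_subset_Icc hy.1 le_rfl hy.2
    (intervalIntegrable_norm_mul hσ₁ (continuousOn_gamma02 hσ₂))
    (fun t _ => mul_nonneg (norm_nonneg _) (gamma02_nonneg σ₂ μ t))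
    fun t _ => by rw [norm_mul, norm_tailOp_eFun]

theorem integral_norm_mul_norm_le_of_le (hσ₁ : IntegrableOn σ₁ (Icc 0 1))
    (hv : ContinuousOn v (Icc 0 1)) {M : ℝ} (hM : ∀ s ∈ Icc (0:ℝ) 1, ‖v s‖ ≤ M) :
    ∫ t in (0:ℝ)..1, ‖σ₁ t‖ * ‖v t‖ ≤ (∫ t in (0:ℝ)..1, ‖σ₁ t‖) * M := by
  rw [← intervalIntegral.integral_mul_const]
  exact intervalIntegral.integral_mono_on zero_le_one (intervalIntegrable_norm_mul hσ₁ hv.norm)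
    ((IntegrableOn.intervalIntegrable_of_mem_Icc hσ₁.norm unitInterval.zero_mem
      unitInterval.one_mem).mul_const M)
    fun t ht => mul_le_mul_of_nonneg_left (hM t ht) (norm_nonneg _)

theorem integral_norm_mul_le_of_le_gamma02_mul_add (hσ₁ : IntegrableOn σ₁ (Icc 0 1))
    (hσ₂ : IntegrableOn σ₂ (Icc 0 1)) (hv : ContinuousOn v (Icc 0 1)) {c d : ℝ}
    (hvd : ∀ t ∈ Icc (0:ℝ) 1, ‖v t‖ ≤ gamma02 σ₂ μ t * c + d) :
    ∫ t in (0:ℝ)..1, ‖σ₁ t‖ * ‖v t‖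
        ≤ (∫ t in (0:ℝ)..1, ‖σ₁ t‖ * gamma02 σ₂ μ t) * c + (∫ t in (0:ℝ)..1, ‖σ₁ t‖) * d
      ∧ ∫ t in (0:ℝ)..1, ‖σ₁ t‖ * (gamma02 σ₂ μ t * ‖v t‖)
        ≤ (∫ t in (0:ℝ)..1, ‖σ₁ t‖ * gamma02 σ₂ μ t ^ 2) * c
          + (∫ t in (0:ℝ)..1, ‖σ₁ t‖ * gamma02 σ₂ μ t) * d := by
  have hγ := continuousOn_gamma02 (μ := μ) hσ₂
  have hσ₁γ := intervalIntegrable_norm_mul hσ₁ hγ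
  refine ⟨integral_mul_le_of_le_mul_add zero_le_one (fun t _ => norm_nonneg _)
    (IntegrableOn.intervalIntegrable_of_mem_Icc hσ₁.norm unitInterval.zero_mem
      unitInterval.one_mem) (intervalIntegrable_norm_mul hσ₁ hv.norm) hσ₁γ hvd, ?_⟩
  simpa only [mul_assoc, ← sq] using integral_mul_le_of_le_mul_add
    (w := fun t => ‖σ₁ t‖ * gamma02 σ₂ μ t) zero_le_one
    (fun t _ => mul_nonneg (norm_nonneg _) (gamma02_nonneg σ₂ μ t)) hσ₁γ
    (by simpa only [mul_assoc, Pi.mul_apply] using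
      intervalIntegrable_norm_mul hσ₁ (hγ.mul hv.norm))
    (by simpa only [mul_assoc, ← sq, Pi.pow_apply] using
      intervalIntegrable_norm_mul hσ₁ (hγ.pow 2)) hvd

theorem integral_norm_mul_gamma02_mul_le_of_le (hσ₁ : IntegrableOn σ₁ (Icc 0 1))
    (hσ₂ : IntegrableOn σ₂ (Icc 0 1)) (hv : ContinuousOn v (Icc 0 1)) {M : ℝ}
    (hM : ∀ s ∈ Icc (0:ℝ) 1, ‖v s‖ ≤ M) :
    ∫ t in (0:ℝ)..1, ‖σ₁ t‖ * (gamma02 σ₂ μ t * ‖v t‖)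
      ≤ (∫ t in (0:ℝ)..1, ‖σ₁ t‖ * gamma02 σ₂ μ t) * M := by
  simpa using (integral_norm_mul_le_of_le_gamma02_mul_add (c := 0) hσ₁ hσ₂ hv
    fun t ht => by simpa using hM t ht).2

theorem integral_norm_mul_gamma02_le (hr : 0 ≤ r) (hμ : -r < μ.im)
    (hσ₁ : IntegrableOn σ₁ (Icc 0 1)) (hσ₂ : IntegrableOn σ₂ (Icc 0 1)) :
    ∫ t in (0:ℝ)..1, ‖σ₁ t‖ * gamma02 σ₂ μ t
      ≤ (∫ t in (0:ℝ)..1, ‖σ₁ t‖) * (Real.exp (2 * r) * ∫ t in (0:ℝ)..1, ‖σ₂ t‖) := by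
  simpa only [norm_tailOp_eFun] using integral_norm_mul_norm_le_of_le hσ₁
    (continuousOn_tailOp (μ := μ) (z := eFun) (by simpa [eFun] using hσ₂))
    fun t ht => (norm_tailOp_eFun t).trans_le (gamma02_le hr hμ hσ₂ ht)

theorem sq_integral_norm_mul_gamma02_le (hσ₁ : IntegrableOn σ₁ (Icc 0 1))
    (hσ₂ : IntegrableOn σ₂ (Icc 0 1)) :
    (∫ t in (0:ℝ)..1, ‖σ₁ t‖ * gamma02 σ₂ μ t) ^ 2
      ≤ (∫ t in (0:ℝ)..1, ‖σ₁ t‖) * ∫ t in (0:ℝ)..1, ‖σ₁ t‖ * gamma02 σ₂ μ t ^ 2 := by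
  have hγ := continuousOn_gamma02 (μ := μ) hσ₂
  simp only [intervalIntegral.integral_of_le zero_le_one]
  exact sq_integral_mul_le_integral_mul_integral_mul_sq (ae_of_all _ fun t => norm_nonneg _)
    (IntegrableOn.intervalIntegrable_of_mem_Icc hσ₁.norm unitInterval.zero_mem
      unitInterval.one_mem).1
    (intervalIntegrable_norm_mul hσ₁ hγ).1 (intervalIntegrable_norm_mul hσ₁ (hγ.pow 2)).1

theorem IsIntegralSolution.tailOp_eFun_sub_eq (hσ₁ : IntegrableOn σ₁ (Icc 0 1))
    (hσ₂ : IntegrableOn σ₂ (Icc 0 1)) (hsol : IsIntegralSolution σ₁ σ₂ μ u v)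
    (hy : y ∈ Icc (0:ℝ) 1) :
    tailOp σ₂ μ eFun y - v y
      = (∫ t in (0:ℝ)..y, σ₁ t * v t) * tailOp σ₂ μ eFun y
        + ∫ t in y..(1:ℝ), σ₁ t * v t * (cexp (2 * I * μ * (t - y)) * tailOp σ₂ μ eFun t) := by
  have hσ₁v : IntegrableOn (fun t => σ₁ t * v t) (Icc 0 1) :=
    hσ₁.mul_continuousOn hsol.continuousOn_snd isCompact_Icc
  rw [hsol.snd_eq y hy, ← tailOp_sub (by simpa [eFun] using hσ₂)
    (hσ₂.mul_continuousOn hsol.continuousOn_fst isCompact_Icc) hy, ← tailOp_primitive hσ₁v hσ₂ hy]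
  exact tailOp_congr hy.2 fun s hs => by
    rw [hsol.fst_eq s ⟨hy.1.trans hs.1, hs.2⟩, eFun]; ring

theorem IsIntegralSolution.norm_tailOp_eFun_sub_le (hr : 0 ≤ r) (hμ : -r < μ.im)
    (hσ₁ : IntegrableOn σ₁ (Icc 0 1)) (hσ₂ : IntegrableOn σ₂ (Icc 0 1))
    (hsol : IsIntegralSolution σ₁ σ₂ μ u v) (hy : y ∈ Icc (0:ℝ) 1) :
    ‖tailOp σ₂ μ eFun y - v y‖
      ≤ gamma02 σ₂ μ y * (∫ t in (0:ℝ)..1, ‖σ₁ t‖ * ‖v t‖)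
        + Real.exp (2 * r) * ∫ t in (0:ℝ)..1, ‖σ₁ t‖ * (gamma02 σ₂ μ t * ‖v t‖) := by
  have hγ := continuousOn_gamma02 (μ := μ) hσ₂
  rw [hsol.tailOp_eFun_sub_eq hσ₁ hσ₂ hy]
  refine (norm_add_le _ _).trans (add_le_add ?_ ?_)
  · rw [norm_mul, norm_tailOp_eFun, mul_comm]
    refine mul_le_mul_of_nonneg_left ?_ (gamma02_nonneg σ₂ μ y)
    exact norm_integral_le_integral_of_subset_Icc hy.1 le_rfl hy.2
      (intervalIntegrable_norm_mul hσ₁ hsol.continuousOn_snd.norm)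
      (fun t _ => by positivity) (fun t _ => (norm_mul _ _).le)
  · rw [← intervalIntegral.integral_const_mul]
    refine norm_integral_le_integral_of_subset_Icc hy.2 hy.1 le_rfl
      ((intervalIntegrable_norm_mul hσ₁ (hγ.mul hsol.continuousOn_snd.norm)).const_mul _)
      (fun t _ => by have := gamma02_nonneg σ₂ μ t; positivity) fun t ht => ?_
    have hexp := norm_cexp_two_mul_I_mul_sub_le hr hμ ht.1 (by linarith [hy.1, ht.2])
    rw [norm_mul, norm_mul, norm_mul, norm_tailOp_eFun]
    calc _ ≤ ‖σ₁ t‖ * ‖v t‖ * (Real.exp (2 * r) * gamma02 σ₂ μ t) := by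
          gcongr; exact gamma02_nonneg σ₂ μ t
      _ = _ := by ring

theorem IsIntegralSolution.sub_one_add_K1_eFun_eq (hσ₁ : IntegrableOn σ₁ (Icc 0 1))
    (hσ₂ : IntegrableOn σ₂ (Icc 0 1)) (hsol : IsIntegralSolution σ₁ σ₂ μ u v)
    (hy : y ∈ Icc (0:ℝ) 1) :
    u y - 1 + K1 σ₁ σ₂ μ eFun y = ∫ t in (0:ℝ)..y, σ₁ t * (tailOp σ₂ μ eFun t - v t) := by
  have hQ := continuousOn_tailOp (σ₂ := σ₂) (μ := μ) (z := eFun) (by simpa [eFun] using hσ₂)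
  have hsplit : ∫ t in (0:ℝ)..y, σ₁ t * (tailOp σ₂ μ eFun t - v t)
      = (∫ t in (0:ℝ)..y, σ₁ t * tailOp σ₂ μ eFun t) - ∫ t in (0:ℝ)..y, σ₁ t * v t := by
    simp only [mul_sub]
    exact intervalIntegral.integral_sub
      ((hσ₁.mul_continuousOn hQ isCompact_Icc).intervalIntegrable_of_mem_Icc
        unitInterval.zero_mem hy)
      ((hσ₁.mul_continuousOn hsol.continuousOn_snd isCompact_Icc).intervalIntegrable_of_mem_Icc
        unitInterval.zero_mem hy)
  rw [hsol.fst_eq y hy, K1_eq_integral_tailOp, hsplit]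
  ring

theorem IsIntegralSolution.norm_sub_one_add_K1_eFun_le (hr : 0 ≤ r) (hμ : -r < μ.im)
    (hσ₁ : IntegrableOn σ₁ (Icc 0 1)) (hσ₂ : IntegrableOn σ₂ (Icc 0 1))
    (hsol : IsIntegralSolution σ₁ σ₂ μ u v) (hy : y ∈ Icc (0:ℝ) 1) :
    ‖u y - 1 + K1 σ₁ σ₂ μ eFun y‖
      ≤ (∫ t in (0:ℝ)..1, ‖σ₁ t‖ * gamma02 σ₂ μ t) * (∫ t in (0:ℝ)..1, ‖σ₁ t‖ * ‖v t‖)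
        + (∫ t in (0:ℝ)..1, ‖σ₁ t‖)
          * (Real.exp (2 * r) * ∫ t in (0:ℝ)..1, ‖σ₁ t‖ * (gamma02 σ₂ μ t * ‖v t‖)) := by
  have hQv : ContinuousOn (fun t => ‖tailOp σ₂ μ eFun t - v t‖) (Icc 0 1) :=
    ((continuousOn_tailOp (by simpa [eFun] using hσ₂)).sub hsol.continuousOn_snd).norm
  rw [hsol.sub_one_add_K1_eFun_eq hσ₁ hσ₂ hy]
  refine (norm_integral_le_integral_of_subset_Icc hy.1 le_rfl hy.2
    (intervalIntegrable_norm_mul hσ₁ hQv) (fun t _ => by positivity)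
    fun t _ => (norm_mul _ _).le).trans ?_
  exact integral_mul_le_of_le_mul_add zero_le_one (fun t _ => norm_nonneg _)
    (IntegrableOn.intervalIntegrable_of_mem_Icc hσ₁.norm unitInterval.zero_mem
      unitInterval.one_mem)
    (intervalIntegrable_norm_mul hσ₁ hQv)
    (intervalIntegrable_norm_mul hσ₁ (continuousOn_gamma02 hσ₂))
    fun t ht => hsol.norm_tailOp_eFun_sub_le hr hμ hσ₁ hσ₂ ht

theorem IsIntegralSolution.norm_fst_le (hr : 0 ≤ r) (hμ : -r < μ.im)
    (hσ₁ : IntegrableOn σ₁ (Icc 0 1)) (hσ₂ : IntegrableOn σ₂ (Icc 0 1))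
    (hsol : IsIntegralSolution σ₁ σ₂ μ u v)
    (hcontr : (1 + Real.exp (2 * r)) * (∫ t in (0:ℝ)..1, ‖σ₁ t‖ * gamma02 σ₂ μ t)
      * (∫ t in (0:ℝ)..1, ‖σ₁ t‖) * (Real.exp (2 * r) * ∫ t in (0:ℝ)..1, ‖σ₂ t‖) ≤ 1 / 2)
    (hy : y ∈ Icc (0:ℝ) 1) : ‖u y‖ ≤ 2 * (1 + ∫ t in (0:ℝ)..1, ‖σ₁ t‖ * gamma02 σ₂ μ t) := by
  set A := ∫ t in (0:ℝ)..1, ‖σ₁ t‖ * gamma02 σ₂ μ t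
  set B := ∫ t in (0:ℝ)..1, ‖σ₁ t‖
  obtain ⟨y₀, hy₀, hmax⟩ := isCompact_Icc.exists_isMaxOn (nonempty_Icc.2 zero_le_one)
    hsol.continuousOn_fst.norm
  set M := ‖u y₀‖
  set Mv := Real.exp (2 * r) * (∫ t in (0:ℝ)..1, ‖σ₂ t‖) * M
  have hv : ∀ s ∈ Icc (0:ℝ) 1, ‖v s‖ ≤ Mv := fun s hs => by
    rw [hsol.snd_eq s hs]; exact norm_tailOp_le hr hμ hσ₂ (fun s hs => hmax hs) hs
  have hA : 0 ≤ A := intervalIntegral.integral_nonneg zero_le_one fun t _ =>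
    mul_nonneg (norm_nonneg _) (gamma02_nonneg σ₂ μ t)
  have hB : 0 ≤ B := intervalIntegral.integral_nonneg zero_le_one fun t _ => norm_nonneg _
  have hU := integral_norm_mul_norm_le_of_le hσ₁ hsol.continuousOn_snd hv
  have hT := integral_norm_mul_gamma02_mul_le_of_le (μ := μ) hσ₁ hσ₂ hsol.continuousOn_snd hv
  have hD := hsol.norm_sub_one_add_K1_eFun_le hr hμ hσ₁ hσ₂ hy₀
  have hK := norm_K1_eFun_le (μ := μ) hσ₁ hσ₂ hy₀
  have hM : M ≤ 1 + A + (1 + Real.exp (2 * r)) * A * B * Mv := by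
    calc M = ‖(u y₀ - 1 + K1 σ₁ σ₂ μ eFun y₀) + (1 - K1 σ₁ σ₂ μ eFun y₀)‖ := by
          simp only [M]; congr 1; ring
      _ ≤ ‖u y₀ - 1 + K1 σ₁ σ₂ μ eFun y₀‖ + (1 + ‖K1 σ₁ σ₂ μ eFun y₀‖) :=
        (norm_add_le _ _).trans (by gcongr; exact (norm_sub_le _ _).trans (by simp))
      _ ≤ A * (B * Mv) + B * (Real.exp (2 * r) * (A * Mv)) + (1 + A) := by
        gcongr
        refine hD.trans (add_le_add (by gcongr) (by gcongr))
      _ = _ := by ring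
  have hhalf : (1 + Real.exp (2 * r)) * A * B * Mv ≤ 1 / 2 * M := by
    calc _ = (1 + Real.exp (2 * r)) * A * B * (Real.exp (2 * r) * ∫ t in (0:ℝ)..1, ‖σ₂ t‖) * M := by
          simp only [Mv]; ring
      _ ≤ 1 / 2 * M := mul_le_mul_of_nonneg_right hcontr (norm_nonneg _)
  exact (hmax hy).trans (by linarith)

theorem IsIntegralSolution.norm_snd_le (hr : 0 ≤ r) (hμ : -r < μ.im)
    (hσ₁ : IntegrableOn σ₁ (Icc 0 1)) (hσ₂ : IntegrableOn σ₂ (Icc 0 1))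
    (hsol : IsIntegralSolution σ₁ σ₂ μ u v) {M : ℝ} (hM : ∀ s ∈ Icc (0:ℝ) 1, ‖v s‖ ≤ M)
    (hy : y ∈ Icc (0:ℝ) 1) :
    ‖v y‖ ≤ gamma02 σ₂ μ y * (1 + (∫ t in (0:ℝ)..1, ‖σ₁ t‖) * M)
      + Real.exp (2 * r) * ((∫ t in (0:ℝ)..1, ‖σ₁ t‖ * gamma02 σ₂ μ t) * M) := by
  have hU := integral_norm_mul_norm_le_of_le hσ₁ hsol.continuousOn_snd hM
  have hT := integral_norm_mul_gamma02_mul_le_of_le (μ := μ) hσ₁ hσ₂ hsol.continuousOn_snd hM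
  calc ‖v y‖ ≤ ‖tailOp σ₂ μ eFun y‖ + ‖tailOp σ₂ μ eFun y - v y‖ := norm_le_norm_add_norm_sub _ _
    _ ≤ gamma02 σ₂ μ y + (gamma02 σ₂ μ y * ((∫ t in (0:ℝ)..1, ‖σ₁ t‖) * M)
        + Real.exp (2 * r) * ((∫ t in (0:ℝ)..1, ‖σ₁ t‖ * gamma02 σ₂ μ t) * M)) := by
      rw [norm_tailOp_eFun]
      refine add_le_add le_rfl ((hsol.norm_tailOp_eFun_sub_le hr hμ hσ₁ hσ₂ hy).trans ?_)
      have := gamma02_nonneg σ₂ μ y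
      gcongr
    _ = _ := by ring

theorem IsIntegralSolution.norm_sub_one_add_K1_eFun_le_of_bound (hr : 0 ≤ r) (hμ : -r < μ.im)
    (hσ₁ : IntegrableOn σ₁ (Icc 0 1)) (hσ₂ : IntegrableOn σ₂ (Icc 0 1))
    (hsol : IsIntegralSolution σ₁ σ₂ μ u v) {M : ℝ} (hM : ∀ s ∈ Icc (0:ℝ) 1, ‖v s‖ ≤ M)
    (hy : y ∈ Icc (0:ℝ) 1) :
    ‖u y - 1 + K1 σ₁ σ₂ μ eFun y‖
      ≤ (1 + Real.exp (2 * r)) * (∫ t in (0:ℝ)..1, ‖σ₁ t‖)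
        * (∫ t in (0:ℝ)..1, ‖σ₁ t‖ * gamma02 σ₂ μ t ^ 2)
        * (1 + (1 + Real.exp (2 * r)) * (∫ t in (0:ℝ)..1, ‖σ₁ t‖) * M) := by
  set ce := Real.exp (2 * r)
  set A := ∫ t in (0:ℝ)..1, ‖σ₁ t‖ * gamma02 σ₂ μ t
  set B := ∫ t in (0:ℝ)..1, ‖σ₁ t‖
  set G := ∫ t in (0:ℝ)..1, ‖σ₁ t‖ * gamma02 σ₂ μ t ^ 2
  obtain ⟨hU, hT⟩ := integral_norm_mul_le_of_le_gamma02_mul_add hσ₁ hσ₂ hsol.continuousOn_snd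
    fun t ht => hsol.norm_snd_le hr hμ hσ₁ hσ₂ hM ht
  have hCS : A ^ 2 ≤ B * G := sq_integral_norm_mul_gamma02_le hσ₁ hσ₂
  have hA : 0 ≤ A := intervalIntegral.integral_nonneg zero_le_one fun t _ =>
    mul_nonneg (norm_nonneg _) (gamma02_nonneg σ₂ μ t)
  have hB : 0 ≤ B := intervalIntegral.integral_nonneg zero_le_one fun t _ => norm_nonneg _
  have hM0 : 0 ≤ M := (norm_nonneg _).trans (hM 0 unitInterval.zero_mem)
  have hce : 0 ≤ ce := (Real.exp_pos _).le
  calc ‖u y - 1 + K1 σ₁ σ₂ μ eFun y‖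
      ≤ A * (A * (1 + B * M) + B * (ce * (A * M)))
        + B * (ce * (G * (1 + B * M) + A * (ce * (A * M)))) := by
        refine (hsol.norm_sub_one_add_K1_eFun_le hr hμ hσ₁ hσ₂ hy).trans ?_
        gcongr
    _ = A ^ 2 * (1 + B * M + (1 + ce) * ce * B * M) + ce * (B * G) * (1 + B * M) := by ring
    _ ≤ (B * G) * (1 + B * M + (1 + ce) * ce * B * M) + ce * (B * G) * (1 + B * M) := by
        gcongr
    _ = _ := by ring

theorem IsIntegralSolution.snd_sub_tailOp_eFun_add_eq (hσ₁ : IntegrableOn σ₁ (Icc 0 1))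
    (hσ₂ : IntegrableOn σ₂ (Icc 0 1))
    (hsol : IsIntegralSolution σ₁ σ₂ μ u v) (hy : y ∈ Icc (0:ℝ) 1) :
    v y - tailOp σ₂ μ eFun y + tailOp σ₂ μ (K1 σ₁ σ₂ μ eFun) y
      = tailOp σ₂ μ (fun s => u s - eFun s + K1 σ₁ σ₂ μ eFun s) y := by
  have hσ₂e : IntegrableOn (fun s => σ₂ s * eFun s) (Icc 0 1) := by simpa [eFun] using hσ₂
  have hσ₂u := hσ₂.mul_continuousOn hsol.continuousOn_fst isCompact_Icc
  rw [tailOp_add (z₁ := fun s => u s - eFun s)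
    (by simpa only [mul_sub, Pi.sub_def] using hσ₂u.sub hσ₂e)
    (hσ₂.mul_continuousOn (continuousOn_K1_eFun hσ₁ hσ₂) isCompact_Icc) hy,
    tailOp_sub hσ₂u hσ₂e hy, hsol.snd_eq y hy]

end Estimates

section LpBounds

variable {σ₁ σ₂ : ℝ → ℂ} {p : ℝ≥0∞}

theorem memLp_max_norm (hσ₁ : MemLp σ₁ p (volume.restrict (Icc (0:ℝ) 1)))
    (hσ₂ : MemLp σ₂ p (volume.restrict (Icc (0:ℝ) 1))) :
    MemLp (fun x => max ‖σ₁ x‖ ‖σ₂ x‖) p (volume.restrict (Icc (0:ℝ) 1)) :=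
  (hσ₁.norm.add hσ₂.norm).of_le (hσ₁.1.norm.sup hσ₂.1.norm) <| ae_of_all _ fun x => by
    rw [Real.norm_of_nonneg ((norm_nonneg _).trans (le_max_left _ _))]
    exact (max_le_add_of_nonneg (norm_nonneg (σ₁ x)) (norm_nonneg (σ₂ x))).trans
      (Real.le_norm_self _)

theorem toReal_eLpNorm_le_sigmaNorm {σ : ℝ → ℂ} (hσ₁ : MemLp σ₁ p (volume.restrict (Icc (0:ℝ) 1)))
    (hσ₂ : MemLp σ₂ p (volume.restrict (Icc (0:ℝ) 1))) (hσ : ∀ x, ‖σ x‖ ≤ max ‖σ₁ x‖ ‖σ₂ x‖) :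
    (eLpNorm σ p (volume.restrict (Icc (0:ℝ) 1))).toReal ≤ sigmaNorm σ₁ σ₂ p :=
  ENNReal.toReal_mono (memLp_max_norm hσ₁ hσ₂).eLpNorm_ne_top <|
    eLpNorm_mono_real fun x => hσ x

theorem integral_norm_le_sigmaNorm {σ : ℝ → ℂ} (hp : 1 ≤ p)
    (hσ₁ : MemLp σ₁ p (volume.restrict (Icc (0:ℝ) 1)))
    (hσ₂ : MemLp σ₂ p (volume.restrict (Icc (0:ℝ) 1)))
    (hσ : MemLp σ p (volume.restrict (Icc (0:ℝ) 1))) (hσle : ∀ x, ‖σ x‖ ≤ max ‖σ₁ x‖ ‖σ₂ x‖) :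
    ∫ t in (0:ℝ)..1, ‖σ t‖ ≤ sigmaNorm σ₁ σ₂ p := by
  rw [intervalIntegral_zero_one_eq_integral_Icc, integral_norm_eq_lintegral_enorm hσ.1,
    ← eLpNorm_one_eq_lintegral_enorm]
  exact (ENNReal.toReal_mono hσ.eLpNorm_ne_top (eLpNorm_le_eLpNorm_of_exponent_le hp hσ.1)).trans
    (toReal_eLpNorm_le_sigmaNorm hσ₁ hσ₂ hσle)

theorem integral_norm_mul_gamma02_le_sigmaNorm_mul {q : ℝ≥0∞} {μ : ℂ} (hpq : 1 / p + 1 / q = 1)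
    (hσ₁ : MemLp σ₁ p (volume.restrict (Icc (0:ℝ) 1)))
    (hσ₂ : MemLp σ₂ p (volume.restrict (Icc (0:ℝ) 1))) (hσ₂i : IntegrableOn σ₂ (Icc 0 1)) :
    ∫ t in (0:ℝ)..1, ‖σ₁ t‖ * gamma02 σ₂ μ t ≤ sigmaNorm σ₁ σ₂ p * gamma2 σ₂ q μ := by
  have : p.HolderTriple q 1 := ⟨by simpa only [one_div, inv_one] using hpq⟩
  have hγ := continuousOn_gamma02 (μ := μ) hσ₂i
  obtain ⟨C, hC⟩ := isCompact_Icc.exists_bound_of_continuousOn hγ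
  have hγq : MemLp (gamma02 σ₂ μ) q (volume.restrict (Icc (0:ℝ) 1)) :=
    (memLp_top_of_bound (hγ.aestronglyMeasurable measurableSet_Icc) C
      ((ae_restrict_iff' measurableSet_Icc).2 (ae_of_all _ hC))).mono_exponent le_top
  rw [intervalIntegral_zero_one_eq_integral_Icc]
  calc ∫ t, ‖σ₁ t‖ * gamma02 σ₂ μ t ∂volume.restrict (Icc (0:ℝ) 1)
      = ∫ t, ‖σ₁ t‖ * ‖gamma02 σ₂ μ t‖ ∂volume.restrict (Icc (0:ℝ) 1) := by
        simp only [Real.norm_of_nonneg (gamma02_nonneg σ₂ μ _)]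
    _ ≤ _ := integral_norm_mul_le_toReal_eLpNorm_mul hσ₁ hγq
    _ ≤ _ := mul_le_mul (toReal_eLpNorm_le_sigmaNorm hσ₁ hσ₂ fun x => le_max_left _ _) le_rfl
        ENNReal.toReal_nonneg ENNReal.toReal_nonneg

end LpBounds

theorem contraction_factor_le {c s γ A B S : ℝ} (hc : 1 ≤ c) (hA0 : 0 ≤ A) (hB0 : 0 ≤ B)
    (hS0 : 0 ≤ S) (hA : A ≤ s * γ) (hB : B ≤ s) (hS : S ≤ s)
    (hγ : γ ≤ 1 / (2 * (2 * c ^ 2 * s ^ 3))) : (1 + c) * A * B * (c * S) ≤ 1 / 2 := by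
  have hs : 0 ≤ s := hB0.trans hB
  have hsγ : 0 ≤ s * γ := hA0.trans hA
  calc (1 + c) * A * B * (c * S) ≤ (2 * c) * (s * γ) * s * (c * s) := by
        gcongr
        · linarith
    _ = 2 * c ^ 2 * s ^ 3 * γ := by ring
    _ ≤ 1 / 2 := by
        rcases hs.eq_or_lt with rfl | hs'
        · simp
        · rw [le_div_iff₀ (by positivity)] at hγ
          nlinarith

/-- The constant of the estimate for the first component, in terms of `s = ‖σ‖_{L^p}` and
`c = e^{2r}`. -/
def remainderConst (s c : ℝ) : ℝ :=
  (1 + c) * s * (1 + (1 + c) * s * (c * s * (2 * (1 + c * s ^ 2))))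

theorem gammaT_nonneg (σ₁ σ₂ : ℝ → ℂ) (μ : ℂ) : 0 ≤ gammaT σ₁ σ₂ μ :=
  add_nonneg
    (intervalIntegral.integral_nonneg zero_le_one fun _ _ => by unfold gamma01; positivity)
    (intervalIntegral.integral_nonneg zero_le_one fun t _ => by
      have := gamma02_nonneg σ₂ μ t; positivity)

section MainEstimate

variable {σ₁ σ₂ : ℝ → ℂ} {μ : ℂ} {r : ℝ} {p q : ℝ≥0∞}

theorem contraction_of_gamma2_le (hp : 1 ≤ p) (hpq : 1 / p + 1 / q = 1)
    (hσ₁ : MemLp σ₁ p (volume.restrict (Icc (0:ℝ) 1)))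
    (hσ₂ : MemLp σ₂ p (volume.restrict (Icc (0:ℝ) 1))) (hr : 0 ≤ r)
    (hγ₂ : gamma2 σ₂ q μ ≤ 1 / (2 * (2 * Real.exp (4 * r) * (sigmaNorm σ₁ σ₂ p) ^ 3))) :
    (1 + Real.exp (2 * r)) * (∫ t in (0:ℝ)..1, ‖σ₁ t‖ * gamma02 σ₂ μ t)
      * (∫ t in (0:ℝ)..1, ‖σ₁ t‖) * (Real.exp (2 * r) * ∫ t in (0:ℝ)..1, ‖σ₂ t‖) ≤ 1 / 2 := by
  have hσ₂i : IntegrableOn σ₂ (Icc 0 1) := hσ₂.integrable hp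
  refine contraction_factor_le (Real.one_le_exp (by linarith))
    (intervalIntegral.integral_nonneg zero_le_one fun t _ =>
      mul_nonneg (norm_nonneg _) (gamma02_nonneg σ₂ μ t))
    (intervalIntegral.integral_nonneg zero_le_one fun t _ => norm_nonneg _)
    (intervalIntegral.integral_nonneg zero_le_one fun t _ => norm_nonneg _)
    (integral_norm_mul_gamma02_le_sigmaNorm_mul hpq hσ₁ hσ₂ hσ₂i)
    (integral_norm_le_sigmaNorm hp hσ₁ hσ₂ hσ₁ fun x => le_max_left _ _)
    (integral_norm_le_sigmaNorm hp hσ₁ hσ₂ hσ₂ fun x => le_max_right _ _) ?_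
  rwa [show Real.exp (2 * r) ^ 2 = Real.exp (4 * r) by rw [← Real.exp_nat_mul]; ring_nf]

theorem IsIntegralSolution.norm_sub_one_add_K1_eFun_le_gammaT {u v : ℝ → ℂ} {y : ℝ}
    (hp : 1 ≤ p) (hpq : 1 / p + 1 / q = 1) (hσ₁ : MemLp σ₁ p (volume.restrict (Icc (0:ℝ) 1)))
    (hσ₂ : MemLp σ₂ p (volume.restrict (Icc (0:ℝ) 1))) (hr : 0 ≤ r) (hμ : -r < μ.im)
    (hγ₂ : gamma2 σ₂ q μ ≤ 1 / (2 * (2 * Real.exp (4 * r) * (sigmaNorm σ₁ σ₂ p) ^ 3)))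
    (hsol : IsIntegralSolution σ₁ σ₂ μ u v) (hy : y ∈ Icc (0:ℝ) 1) :
    ‖u y - 1 + K1 σ₁ σ₂ μ eFun y‖
      ≤ remainderConst (sigmaNorm σ₁ σ₂ p) (Real.exp (2 * r)) * gammaT σ₁ σ₂ μ := by
  have hσ₁i : IntegrableOn σ₁ (Icc 0 1) := hσ₁.integrable hp
  have hσ₂i : IntegrableOn σ₂ (Icc 0 1) := hσ₂.integrable hp
  set s := sigmaNorm σ₁ σ₂ p
  set c := Real.exp (2 * r)
  set A := ∫ t in (0:ℝ)..1, ‖σ₁ t‖ * gamma02 σ₂ μ t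
  set B := ∫ t in (0:ℝ)..1, ‖σ₁ t‖
  set S := ∫ t in (0:ℝ)..1, ‖σ₂ t‖
  have hB0 : 0 ≤ B := intervalIntegral.integral_nonneg zero_le_one fun t _ => norm_nonneg _
  have hS0 : 0 ≤ S := intervalIntegral.integral_nonneg zero_le_one fun t _ => norm_nonneg _
  have hB : B ≤ s := integral_norm_le_sigmaNorm hp hσ₁ hσ₂ hσ₁ fun x => le_max_left _ _
  have hS : S ≤ s := integral_norm_le_sigmaNorm hp hσ₁ hσ₂ hσ₂ fun x => le_max_right _ _
  have hs0 : 0 ≤ s := hB0.trans hB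
  have hc0 : 0 ≤ c := (Real.exp_pos _).le
  have hA0 : 0 ≤ A := intervalIntegral.integral_nonneg zero_le_one fun t _ =>
    mul_nonneg (norm_nonneg _) (gamma02_nonneg σ₂ μ t)
  have hA : A ≤ c * s ^ 2 := calc
    A ≤ B * (c * S) := integral_norm_mul_gamma02_le hr hμ hσ₁i hσ₂i
    _ ≤ s * (c * s) := by gcongr
    _ = c * s ^ 2 := by ring
  have hv : ∀ t ∈ Icc (0:ℝ) 1, ‖v t‖ ≤ c * S * (2 * (1 + A)) := fun t ht => by
    rw [hsol.snd_eq t ht]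
    exact norm_tailOp_le hr hμ hσ₂i (fun s hs => hsol.norm_fst_le hr hμ hσ₁i hσ₂i
      (contraction_of_gamma2_le hp hpq hσ₁ hσ₂ hr hγ₂) hs) ht
  have hMv : c * S * (2 * (1 + A)) ≤ c * s * (2 * (1 + c * s ^ 2)) := by gcongr
  have hG0 : 0 ≤ ∫ t in (0:ℝ)..1, ‖σ₁ t‖ * gamma02 σ₂ μ t ^ 2 :=
    intervalIntegral.integral_nonneg zero_le_one fun t _ => by
      have := gamma02_nonneg σ₂ μ t; positivity
  have hG : ∫ t in (0:ℝ)..1, ‖σ₁ t‖ * gamma02 σ₂ μ t ^ 2 ≤ gammaT σ₁ σ₂ μ :=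
    le_add_of_nonneg_left (intervalIntegral.integral_nonneg zero_le_one fun _ _ => by
      unfold gamma01; positivity)
  have hγT := gammaT_nonneg σ₁ σ₂ μ
  refine (hsol.norm_sub_one_add_K1_eFun_le_of_bound hr hμ hσ₁i hσ₂i hv hy).trans ?_
  calc _ ≤ (1 + c) * s * gammaT σ₁ σ₂ μ * (1 + (1 + c) * s * (c * s * (2 * (1 + c * s ^ 2)))) := by
        gcongr
    _ = _ := by unfold remainderConst; ring

end MainEstimate

theorem stmt7_general
    (p q : ℝ≥0∞) (hp1 : 1 ≤ p) (hpq : 1/p + 1/q = 1)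
    (σ₁ σ₂ : ℝ → ℂ)
    (hσ₁ : MemLp σ₁ p (volume.restrict (Icc (0:ℝ) 1)))
    (hσ₂ : MemLp σ₂ p (volume.restrict (Icc (0:ℝ) 1)))
    (r : ℝ) (hr : 0 ≤ r) :
    ∃ C > 0, ∀ μ : ℂ, -r < μ.im →
      gamma1 σ₁ q μ ≤ 1 / (2 * (2 * Real.exp (4*r) * (sigmaNorm σ₁ σ₂ p)^3)) →
      gamma2 σ₂ q μ ≤ 1 / (2 * (2 * Real.exp (4*r) * (sigmaNorm σ₁ σ₂ p)^3)) →
      ∀ w₁ w₂ : ℝ → ℂ, IsDiracSolution σ₁ σ₂ μ w₁ w₂ → w₁ 0 = 1 → w₂ 1 = 0 →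
        ∀ x ∈ Icc (0:ℝ) 1,
          ‖Complex.exp (-(Complex.I * μ * x)) * w₁ x - 1 + K1 σ₁ σ₂ μ eFun x‖
              ≤ C * gammaT σ₁ σ₂ μ
          ∧ ‖Complex.exp (-(Complex.I * μ * x)) * w₂ x
              - (∫ t in x..(1:ℝ), Complex.exp (2*Complex.I*μ*(t - x)) * σ₂ t)
              + ∫ t in x..(1:ℝ), Complex.exp (2*Complex.I*μ*(t - x)) * σ₂ t * K1 σ₁ σ₂ μ eFun t‖
              ≤ C * gammaT σ₁ σ₂ μ := by
  set s := sigmaNorm σ₁ σ₂ p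
  set c := Real.exp (2 * r)
  have hs : 0 ≤ s := ENNReal.toReal_nonneg
  have hc : 0 ≤ c := (Real.exp_pos _).le
  have hC₁ : 0 ≤ remainderConst s c := by unfold remainderConst; positivity
  refine ⟨1 + (1 + c * s) * remainderConst s c, by positivity,
    fun μ hμ _ hγ₂ w₁ w₂ hsol hw₁ hw₂ x hx => ?_⟩
  have hσ₁i : IntegrableOn σ₁ (Icc 0 1) := hσ₁.integrable hp1
  have hσ₂i : IntegrableOn σ₂ (Icc 0 1) := hσ₂.integrable hp1
  have hint := hsol.isIntegralSolution hσ₂i hw₁ hw₂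
  have hD := fun y (hy : y ∈ Icc (0:ℝ) 1) =>
    hint.norm_sub_one_add_K1_eFun_le_gammaT hp1 hpq hσ₁ hσ₂ hr hμ hγ₂ hy
  have hγT := gammaT_nonneg σ₁ σ₂ μ
  have hS := integral_norm_le_sigmaNorm hp1 hσ₁ hσ₂ hσ₂ fun x => le_max_right _ _
  refine ⟨(hD x hx).trans (by gcongr; nlinarith [mul_nonneg (mul_nonneg hc hs) hC₁]), ?_⟩
  rw [← tailOp_eFun_eq, ← tailOp, hint.snd_sub_tailOp_eFun_add_eq hσ₁i hσ₂i hx]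
  calc _ ≤ c * (∫ t in (0:ℝ)..1, ‖σ₂ t‖) * (remainderConst s c * gammaT σ₁ σ₂ μ) :=
        norm_tailOp_le hr hμ hσ₂i hD hx
    _ ≤ _ := by nlinarith [mul_le_mul_of_nonneg_right hS (mul_nonneg hC₁ hγT)]

/-- asymptotics of the solution `(w₁,w₂)` with `w₁(0)=1`, `w₂(1)=0`, remainder `O(γ̃)`. -/
theorem stmt7
    (p q : ℝ≥0∞) (hp1 : 1 ≤ p) (hp2 : p < 2) (hpq : 1/p + 1/q = 1)
    (σ₁ σ₂ : ℝ → ℂ) (hσ₁m : Measurable σ₁) (hσ₂m : Measurable σ₂)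
    (hσ₁ : MemLp σ₁ p (volume.restrict (Icc (0:ℝ) 1)))
    (hσ₂ : MemLp σ₂ p (volume.restrict (Icc (0:ℝ) 1)))
    (r : ℝ) (hr : 0 ≤ r) :
    ∃ C > 0, ∀ μ : ℂ, -r < μ.im →
      gamma1 σ₁ q μ ≤ 1 / (2 * (2 * Real.exp (4*r) * (sigmaNorm σ₁ σ₂ p)^3)) →
      gamma2 σ₂ q μ ≤ 1 / (2 * (2 * Real.exp (4*r) * (sigmaNorm σ₁ σ₂ p)^3)) →
      ∀ w₁ w₂ : ℝ → ℂ, IsDiracSolution σ₁ σ₂ μ w₁ w₂ → w₁ 0 = 1 → w₂ 1 = 0 →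
        ∀ x ∈ Icc (0:ℝ) 1,
          ‖Complex.exp (-(Complex.I * μ * x)) * w₁ x - 1 + K1 σ₁ σ₂ μ eFun x‖
              ≤ C * gammaT σ₁ σ₂ μ
          ∧ ‖Complex.exp (-(Complex.I * μ * x)) * w₂ x
              - (∫ t in x..(1:ℝ), Complex.exp (2*Complex.I*μ*(t - x)) * σ₂ t)
              + ∫ t in x..(1:ℝ), Complex.exp (2*Complex.I*μ*(t - x)) * σ₂ t * K1 σ₁ σ₂ μ eFun t‖
              ≤ C * gammaT σ₁ σ₂ μ :=
  stmt7_general p q hp1 hpq σ₁ σ₂ hσ₁ hσ₂ r hr
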